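/- arXiv:1803.05359 — 3 statements merged into one kernel-verified Lean document; each statement's English description precedes it below -/
import Mathlib

section
/- Let a Lie algebra have generators J_{μν} (Lorentz), P_μ, K_μ (Lorentz vectors), Q (Lorentz scalar), and X (Lorentz scalar), with [P_μ,P_ν]=0 and parameterized brackets [P_μ,K_ν] = i(a g_{μν}Q + b J_{μν} + j g_{μν}X), [P_μ,Q]=i(dP_μ+eK_μ), [K_μ,K_ν]=i f J_{μν}, [K_μ,Q]=i(hP_μ+iK_μ), [P_μ,X]=i(kP_μ+ℓK_μ), [K_μ,X]=i(mP_μ+nK_μ), [Q,X]=i(oQ+pX). If the Jacobi identities hold and a ≠ 0 and ℓ ≠ 0, then b=0, f=0, d=ek/ℓ, h=em/ℓ, i=en/ℓ, j=−ae/ℓ, o=k+n, p=−(e/ℓ)(k+n). -/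
/-- The Minkowski metric of signature (+,−,−,−). -/
def mink (μ ν : Fin 4) : ℝ := if μ = ν then (if μ = 0 then 1 else -1) else 0

/-- Extension of the Poincaré algebra + scalar `Q` + redundant vector `K_μ` by an extra
Lorentz scalar `X`. If the Jacobi identities hold (i.e. the brackets live in an actual Lie
algebra with linearly independent generators) and `a ≠ 0`, `ℓ ≠ 0`, then
`b = 0`, `f = 0`, `d = ek/ℓ`, `h = em/ℓ`, `i = en/ℓ`, `j = −ae/ℓ`, `o = k+n`,
`p = −(e/ℓ)(k+n)`. -/
theorem stmt6 {L : Type*} [LieRing L] [LieAlgebra ℂ L]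
    (J : Fin 4 → Fin 4 → L) (P K : Fin 4 → L) (Q X : L)
    (a b d e f h i j k l m n o p : ℝ) (ha : a ≠ 0) (hl : l ≠ 0)
    (hJa : ∀ μ ν, J μ ν = - J ν μ)
    (hind : LinearIndependent ℂ
      (Sum.elim (fun q : {q : Fin 4 × Fin 4 // q.1 < q.2} => J q.1.1 q.1.2)
        (Sum.elim (Sum.elim P K) (fun bl : Bool => if bl then Q else X))))
    (hJJ : ∀ μ ν κ lam, ⁅J μ ν, J κ lam⁆ =
      Complex.I • ((mink μ lam : ℂ) • J ν κ + (mink ν κ : ℂ) • J μ lam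
        - (mink μ κ : ℂ) • J ν lam - (mink ν lam : ℂ) • J μ κ))
    (hJP : ∀ μ ν lam, ⁅J μ ν, P lam⁆ =
      Complex.I • ((mink ν lam : ℂ) • P μ - (mink μ lam : ℂ) • P ν))
    (hJK : ∀ μ ν lam, ⁅J μ ν, K lam⁆ =
      Complex.I • ((mink ν lam : ℂ) • K μ - (mink μ lam : ℂ) • K ν))
    (hJQ : ∀ μ ν, ⁅J μ ν, Q⁆ = 0)
    (hJX : ∀ μ ν, ⁅J μ ν, X⁆ = 0)
    (hPP : ∀ μ ν, ⁅P μ, P ν⁆ = 0)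
    (hPK : ∀ μ ν, ⁅P μ, K ν⁆ =
      Complex.I • (((a * mink μ ν : ℝ) : ℂ) • Q + (b : ℂ) • J μ ν
        + ((j * mink μ ν : ℝ) : ℂ) • X))
    (hPQ : ∀ μ, ⁅P μ, Q⁆ = Complex.I • ((d : ℂ) • P μ + (e : ℂ) • K μ))
    (hKK : ∀ μ ν, ⁅K μ, K ν⁆ = Complex.I • ((f : ℂ) • J μ ν))
    (hKQ : ∀ μ, ⁅K μ, Q⁆ = Complex.I • ((h : ℂ) • P μ + (i : ℂ) • K μ))
    (hPX : ∀ μ, ⁅P μ, X⁆ = Complex.I • ((k : ℂ) • P μ + (l : ℂ) • K μ))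
    (hKX : ∀ μ, ⁅K μ, X⁆ = Complex.I • ((m : ℂ) • P μ + (n : ℂ) • K μ))
    (hQX : ⁅Q, X⁆ = Complex.I • ((o : ℂ) • Q + (p : ℂ) • X)) :
    b = 0 ∧ f = 0 ∧ d = e * k / l ∧ h = e * m / l ∧ i = e * n / l ∧
      j = -(a * e) / l ∧ o = k + n ∧ p = -(e / l) * (k + n) := by
  have m00 : mink 0 0 = 1 := by norm_num [mink]
  have m01 : mink 0 1 = 0 := by norm_num [mink]
  have m10 : mink 1 0 = 0 := by norm_num [mink]
  have m11 : mink 1 1 = (-1 : ℝ) := by norm_num [mink]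
  have hJ00 : J 0 0 = 0 := by
    have h2 : (2:ℂ) • J 0 0 = 0 := by
      rw [two_smul]; nth_rewrite 2 [hJa 0 0]; simp
    calc J 0 0 = ((2:ℂ)⁻¹ * 2) • J 0 0 := by norm_num
    _ = (2:ℂ)⁻¹ • ((2:ℂ) • J 0 0) := by rw [mul_smul]
    _ = 0 := by rw [h2, smul_zero]
  have hJ11 : J 1 1 = 0 := by
    have h2 : (2:ℂ) • J 1 1 = 0 := by
      rw [two_smul]; nth_rewrite 2 [hJa 1 1]; simp
    calc J 1 1 = ((2:ℂ)⁻¹ * 2) • J 1 1 := by norm_num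
    _ = (2:ℂ)⁻¹ • ((2:ℂ) • J 1 1) := by rw [mul_smul]
    _ = 0 := by rw [h2, smul_zero]
  have hJ10 : J 1 0 = - J 0 1 := hJa 1 0
  have hKP : ∀ μ ν, ⁅K μ, P ν⁆ = -⁅P ν, K μ⁆ := fun μ ν => (lie_skew (K μ) (P ν)).symm
  have hXP : ∀ μ, ⁅X, P μ⁆ = -⁅P μ, X⁆ := fun μ => (lie_skew X (P μ)).symm
  have hXK : ∀ μ, ⁅X, K μ⁆ = -⁅K μ, X⁆ := fun μ => (lie_skew X (K μ)).symm
  have hQP : ∀ μ, ⁅Q, P μ⁆ = -⁅P μ, Q⁆ := fun μ => (lie_skew Q (P μ)).symm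
  have hQK : ∀ μ, ⁅Q, K μ⁆ = -⁅K μ, Q⁆ := fun μ => (lie_skew Q (K μ)).symm
  have hXQ : ⁅X, Q⁆ = -⁅Q, X⁆ := (lie_skew X Q).symm
  have hPJ : ∀ lam μ ν, ⁅P lam, J μ ν⁆ = -⁅J μ ν, P lam⁆ := fun lam μ ν => (lie_skew (P lam) (J μ ν)).symm
  have hKJ : ∀ lam μ ν, ⁅K lam, J μ ν⁆ = -⁅J μ ν, K lam⁆ := fun lam μ ν => (lie_skew (K lam) (J μ ν)).symm
  -- ===== extraction lemmas from linear independence =====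
  have hJ01ind : ∀ c : ℝ, (c : ℂ) • J 0 1 = 0 → c = 0 := by
    intro c hc
    have h2 := hind.comp (fun _ : Unit => Sum.inl ⟨(0,1), by decide⟩)
      (fun x y _ => rfl)
    rw [Fintype.linearIndependent_iff] at h2
    have h3 := h2 (fun _ => (c:ℂ)) (by simpa using hc) ()
    exact_mod_cast h3
  have hQXind : ∀ cq cx : ℝ, (cq : ℂ) • Q + (cx : ℂ) • X = 0 → cq = 0 ∧ cx = 0 := by
    intro cq cx hc
    have h2 := hind.comp (fun bl : Bool => Sum.inr (Sum.inr bl))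
      (fun x y hxy => by simpa using hxy)
    rw [Fintype.linearIndependent_iff] at h2
    have h3 := h2 (fun bl => if bl then (cq:ℂ) else (cx:ℂ))
      (by simpa [Fintype.sum_bool] using hc)
    constructor
    · have h4 := h3 true; simp only [if_true] at h4; exact_mod_cast h4
    · have h4 := h3 false; simp only [Bool.false_eq_true, if_false] at h4; exact_mod_cast h4
  have hPKind : ∀ cp ck : ℝ, (cp : ℂ) • P 0 + (ck : ℂ) • K 0 = 0 → cp = 0 ∧ ck = 0 := by
    intro cp ck hc
    have h2 := hind.comp
      (fun bl : Bool => Sum.inr (Sum.inl (if bl then Sum.inl 0 else Sum.inr 0)))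
      (fun x y hxy => by revert hxy; cases x <;> cases y <;> simp)
    rw [Fintype.linearIndependent_iff] at h2
    have h3 := h2 (fun bl => if bl then (cp:ℂ) else (ck:ℂ))
      (by simpa [Fintype.sum_bool] using hc)
    constructor
    · have h4 := h3 true; simp only [if_true] at h4; exact_mod_cast h4
    · have h4 := h3 false; simp only [Bool.false_eq_true, if_false] at h4; exact_mod_cast h4
  -- ===== identity A : (P0,P1,X) =====
  have hA := leibniz_lie (P 0) (P 1) X
  rw [hPX 1, hPX 0, hPP 0 1] at hA
  simp only [lie_smul, lie_add, smul_lie, add_lie, zero_lie, lie_zero, smul_zero, zero_smul,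
    zero_add, add_zero, hPP, hPK, hKP, hKK, m01, m10, hJ10] at hA
  rw [← sub_eq_zero] at hA
  have eA : ((-(2*(l*b)) : ℝ) : ℂ) • J 0 1 = 0 := by
    rw [← hA]
    match_scalars <;> (try push_cast) <;> (try ring_nf) <;> (try simp [Complex.I_sq]) <;>
      (try ring)
  have hb : b = 0 := by
    have := hJ01ind _ eA
    have hl2 : l * b = 0 := by linarith
    rcases mul_eq_zero.mp hl2 with h' | h'
    · exact absurd h' hl
    · exact h'
  -- ===== identity B : (P0,K1,X) =====
  have hB := leibniz_lie (P 0) (K 1) X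
  rw [hKX 1, hPK 0 1, hPX 0] at hB
  simp only [lie_smul, lie_add, smul_lie, add_lie, zero_lie, lie_zero, smul_zero, zero_smul,
    zero_add, add_zero, neg_zero, neg_neg, lie_neg, neg_lie, smul_neg, lie_self,
    hPP, hPK, hKP, hKK, hJX, hJQ, m01, m10, m00, m11, hJ10, hJ00, hJ11] at hB
  rw [← sub_eq_zero] at hB
  have eB : ((-(n*b) - k*b - l*f : ℝ) : ℂ) • J 0 1 = 0 := by
    rw [← hB]
    match_scalars <;> (try push_cast) <;> (try ring_nf) <;> (try simp [Complex.I_sq]) <;>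
      (try ring)
  have hf : f = 0 := by
    have h1 := hJ01ind _ eB
    have h2 : l * f = 0 := by rw [hb] at h1; linarith
    rcases mul_eq_zero.mp h2 with h' | h'
    · exact absurd h' hl
    · exact h'
  -- ===== identity C : (P0,P1,K1) =====
  have hC := leibniz_lie (P 0) (P 1) (K 1)
  rw [hPK 1 1, hPP 0 1, hPK 0 1] at hC
  simp only [lie_smul, lie_add, smul_lie, add_lie, zero_lie, lie_zero, smul_zero, zero_smul,
    zero_add, add_zero, neg_zero, neg_neg, lie_neg, neg_lie, smul_neg, lie_self,
    hPP, hPK, hKP, hKK, hPQ, hPX, hPJ, hJP, hJQ, hJX,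
    m01, m10, m00, m11, hJ10, hJ00, hJ11] at hC
  rw [← sub_eq_zero] at hC
  have eC : ((a*d + j*k + b : ℝ) : ℂ) • P 0 + ((a*e + j*l : ℝ) : ℂ) • K 0 = 0 := by
    rw [← hC]
    match_scalars <;> (try push_cast) <;> (try ring_nf) <;> (try simp [Complex.I_sq]) <;>
      (try ring)
  obtain ⟨eC1, eC2⟩ := hPKind _ _ eC
  -- ===== identity D : (K0,K1,P1) =====
  have hD := leibniz_lie (K 0) (K 1) (P 1)
  rw [hKP 1 1, hPK 1 1, hKK 0 1, hKP 0 1, hPK 1 0] at hD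
  simp only [lie_smul, lie_add, smul_lie, add_lie, zero_lie, lie_zero, smul_zero, zero_smul,
    zero_add, add_zero, neg_zero, neg_neg, lie_neg, neg_lie, smul_neg, lie_self,
    hKQ, hKX, hKJ, hJK, hJP, hPJ, hJQ, hJX, hKP, hPK, hKK,
    m01, m10, m00, m11, hJ10, hJ00, hJ11] at hD
  rw [← sub_eq_zero] at hD
  have eD : ((-(a*h + j*m) - f : ℝ) : ℂ) • P 0 + ((-(a*i + j*n) + b : ℝ) : ℂ) • K 0 = 0 := by
    rw [← hD]
    match_scalars <;> (try push_cast) <;> (try ring_nf) <;> (try simp [Complex.I_sq]) <;>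
      (try ring)
  obtain ⟨eD1, eD2⟩ := hPKind _ _ eD
  -- ===== identity E : (P0,K0,X) =====
  have hE := leibniz_lie (P 0) (K 0) X
  rw [hKX 0, hPK 0 0, hPX 0] at hE
  simp only [lie_smul, lie_add, smul_lie, add_lie, zero_lie, lie_zero, smul_zero, zero_smul,
    zero_add, add_zero, neg_zero, neg_neg, lie_neg, neg_lie, smul_neg, lie_self,
    hPP, hPK, hKP, hKK, hQX, hXQ, hJX, hJQ, m01, m10, m00, m11, hJ10, hJ00, hJ11] at hE
  rw [← sub_eq_zero] at hE
  have eE : ((-(n*a) + a*o - k*a : ℝ) : ℂ) • Q + ((-(n*j) + a*p - k*j : ℝ) : ℂ) • X = 0 := by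
    rw [← hE]
    match_scalars <;> (try push_cast) <;> (try ring_nf) <;> (try simp [Complex.I_sq]) <;>
      (try ring)
  obtain ⟨eE1, eE2⟩ := hQXind _ _ eE
  -- ===== final algebra =====
  have hj : j = -(a*e)/l := by
    field_simp
    linarith [eC2]
  have hd : d = e*k/l := by
    have h1 : a*(d*l - e*k) = 0 := by linear_combination l*eC1 - k*eC2 - l*hb
    have h2 : d*l - e*k = 0 := by
      rcases mul_eq_zero.mp h1 with h' | h'
      · exact absurd h' ha
      · exact h'
    field_simp
    linear_combination h2
  have hh : h = e*m/l := by
    have h1 : a*(h*l - e*m) = 0 := by linear_combination -l*eD1 - m*eC2 - l*hf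
    have h2 : h*l - e*m = 0 := by
      rcases mul_eq_zero.mp h1 with h' | h'
      · exact absurd h' ha
      · exact h'
    field_simp
    linear_combination h2
  have hi : i = e*n/l := by
    have h1 : a*(i*l - e*n) = 0 := by linear_combination -l*eD2 - n*eC2 + l*hb
    have h2 : i*l - e*n = 0 := by
      rcases mul_eq_zero.mp h1 with h' | h'
      · exact absurd h' ha
      · exact h'
    field_simp
    linear_combination h2
  have ho : o = k + n := by
    have h1 : a*(o - (k+n)) = 0 := by linear_combination eE1
    have h2 : o - (k+n) = 0 := by
      rcases mul_eq_zero.mp h1 with h' | h'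
      · exact absurd h' ha
      · exact h'
    linarith
  have hp : p = -(e/l)*(k+n) := by
    have h1 : a*(p*l + e*(k+n)) = 0 := by linear_combination l*eE2 + (k+n)*eC2
    have h2 : p*l + e*(k+n) = 0 := by
      rcases mul_eq_zero.mp h1 with h' | h'
      · exact absurd h' ha
      · exact h'
    field_simp
    linear_combination h2
  exact ⟨hb, hf, hd, hh, hi, hj, ho, hp⟩
end

section
/- The 5×5 real matrix M with rows (4κ,4s,0,0,0), (1,4κ,3s,0,0), (0,2,4κ,2s,0), (0,0,3,4κ,s), (0,0,0,4,4κ) has the property that M + 2κ·Id is singular (admits a nonzero left eigenvector with eigenvalue 0) if and only if either κ = 0, or s ≠ 0 and 9κ² = s, or s ≠ 0 and 9κ² = 4s. For κ real and s ∈ {−1,0,+1}, this occurs exactly when κ = 0, or (s = 1 and κ = ±1/3), or (s = 1 and κ = ±2/3). -/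
/-- The 5×5 matrix appearing in the Wess–Zumino construction (spin-zero case). -/
def M8 (κ s : ℝ) : Matrix (Fin 5) (Fin 5) ℝ :=
  !![4*κ, 4*s, 0, 0, 0;
     1, 4*κ, 3*s, 0, 0;
     0, 2, 4*κ, 2*s, 0;
     0, 0, 3, 4*κ, s;
     0, 0, 0, 4, 4*κ]

/-! A left null vector exists exactly when the determinant vanishes, and cofactor expansion of the
tridiagonal matrix `M + 2κ·Id` gives `det = 96 κ (9κ² - s) (9κ² - 4s)`. The side condition `s ≠ 0`
is automatic away from `κ = 0`, and for `s ∈ {-1, 0, 1}` only `s = 1` gives nonzero roots. -/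

lemma det_M8_add_smul_one (κ s : ℝ) :
    (M8 κ s + (2*κ) • 1).det = 96*κ*(9*κ^2 - s)*(9*κ^2 - 4*s) := by
  simp [M8, Matrix.det_succ_row_zero, Fin.sum_univ_succ, Matrix.one_apply, Fin.succAbove]
  ring

lemma exists_vecMul_M8_add_smul_one_eq_zero_iff (κ s : ℝ) :
    (∃ c : Fin 5 → ℝ, c ≠ 0 ∧ Matrix.vecMul c (M8 κ s + (2*κ) • 1) = 0) ↔
      κ = 0 ∨ 9*κ^2 = s ∨ 9*κ^2 = 4*s := by
  rw [Matrix.exists_vecMul_eq_zero_iff, det_M8_add_smul_one]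
  simp [sub_eq_zero, or_assoc]

lemma nine_mul_sq_eq_sq_iff (κ a : ℝ) : 9*κ^2 = a^2 ↔ κ = a/3 ∨ κ = -(a/3) := by
  rw [show 9*κ^2 = (3*κ)^2 by ring, sq_eq_sq_iff_eq_or_eq_neg]
  constructor <;> rintro (h | h) <;> [left; right; left; right] <;> linarith

/-- `M + 2κ·Id` is singular (admits a nonzero left null vector) iff `κ = 0`, or `s ≠ 0`
and `9κ² = s`, or `s ≠ 0` and `9κ² = 4s`; for `s ∈ {−1,0,+1}` this happens exactly when
`κ = 0`, or `s = 1` and `κ = ±1/3`, or `s = 1` and `κ = ±2/3`. -/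
theorem stmt8 (κ s : ℝ) :
    ((∃ c : Fin 5 → ℝ, c ≠ 0 ∧ Matrix.vecMul c (M8 κ s + (2*κ) • 1) = 0) ↔
      (κ = 0 ∨ (s ≠ 0 ∧ 9*κ^2 = s) ∨ (s ≠ 0 ∧ 9*κ^2 = 4*s))) ∧
    ((s = -1 ∨ s = 0 ∨ s = 1) →
      ((∃ c : Fin 5 → ℝ, c ≠ 0 ∧ Matrix.vecMul c (M8 κ s + (2*κ) • 1) = 0) ↔
        (κ = 0 ∨ (s = 1 ∧ (κ = 1/3 ∨ κ = -(1/3))) ∨ (s = 1 ∧ (κ = 2/3 ∨ κ = -(2/3)))))) := by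
  rw [exists_vecMul_M8_add_smul_one_eq_zero_iff]
  refine ⟨?_, ?_⟩
  · have h₁ : 9*κ^2 = s → s = 0 → κ = 0 := by intro h rfl; simpa using h
    have h₄ : 9*κ^2 = 4*s → s = 0 → κ = 0 := by intro h rfl; simpa using h
    tauto
  · rintro (rfl | rfl | rfl)
    · have : 0 ≤ 9*κ^2 := by positivity
      constructor
      · rintro (h | h | h) <;> first | exact Or.inl h | linarith
      · rintro (h | ⟨h, -⟩ | ⟨h, -⟩) <;> first | exact Or.inl h | norm_num at h
    · simp
    · have h₁ := nine_mul_sq_eq_sq_iff κ 1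
      have h₂ := nine_mul_sq_eq_sq_iff κ 2
      norm_num at h₁ h₂ ⊢
      rw [h₁, h₂]
end

section
/- Let ξ^μ(θ) be defined implicitly by ξ_μ · tan(√(v ξ²))/√(v ξ²) = ∂_μθ with v > 0, where ξ² := ξ_μξ^μ. Then the induced metric G_{μν} := g_{αβ} e^α_μ e^β_ν built from the vielbein e^α_μ = δ^α_μ + (ξ^αξ_μ/ξ²)(1/cos√(vξ²) − 1) equals g_{μν} + v ∂_μθ ∂_νθ. -/
/-- The Minkowski square `ξ² = g_{μν} ξ^μ ξ^ν`. -/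
def msq (ξ : Fin 4 → ℝ) : ℝ := ∑ μ, ∑ ν, mink μ ν * ξ μ * ξ ν

/-- The lowered-index vector `ξ_μ = g_{μν} ξ^ν`. -/
def lowerIdx (ξ : Fin 4 → ℝ) (μ : Fin 4) : ℝ := ∑ ν, mink μ ν * ξ ν

/-- The vielbein `e^α_μ = δ^α_μ + (ξ^α ξ_μ / ξ²)(1/cos√(vξ²) − 1)`. -/
noncomputable def viel (v : ℝ) (ξ : Fin 4 → ℝ) (α μ : Fin 4) : ℝ :=
  (if α = μ then 1 else 0)
    + ξ α * lowerIdx ξ μ / msq ξ * (1 / Real.cos (Real.sqrt (v * msq ξ)) - 1)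

open Matrix

lemma transpose_mul_mul_one_add_smul_vecMulVec {R ι : Type*} [CommRing R] [Fintype ι]
    [DecidableEq ι] {g : Matrix ι ι R} (hg : g.IsSymm) (ξ : ι → R) (c : R) :
    (1 + c • vecMulVec ξ (g *ᵥ ξ))ᵀ * g * (1 + c • vecMulVec ξ (g *ᵥ ξ))
      = g + (2 * c + c ^ 2 * (ξ ⬝ᵥ g *ᵥ ξ)) • vecMulVec (g *ᵥ ξ) (g *ᵥ ξ) := by
  have hξg : ξ ᵥ* g = g *ᵥ ξ := by rw [← vecMul_transpose, hg.eq]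
  simp only [transpose_add, transpose_one, transpose_smul, transpose_vecMulVec, add_mul, mul_add,
    one_mul, mul_one, Matrix.smul_mul, Matrix.mul_smul, mul_vecMulVec, vecMulVec_mul,
    smul_mulVec, vecMulVec_mulVec, hξg, op_smul_eq_smul, smul_vecMulVec,
    dotProduct_comm (g *ᵥ ξ) ξ]
  module

lemma transpose_mul_mul_apply {R ι : Type*} [CommSemiring R] [Fintype ι] (g e : Matrix ι ι R)
    (μ ν : ι) : (eᵀ * g * e) μ ν = ∑ α, ∑ β, g α β * e α μ * e β ν := by
  simp only [mul_apply, transpose_apply, Finset.sum_mul]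
  rw [Finset.sum_comm]
  exact Finset.sum_congr rfl fun _ _ => Finset.sum_congr rfl fun _ _ => by ring

lemma one_div_cos_sub_one_sq_add_two_mul (r : ℝ) (h : Real.cos r ≠ 0) :
    (1 / Real.cos r - 1) ^ 2 + 2 * (1 / Real.cos r - 1) = Real.tan r ^ 2 := by
  rw [Real.tan_eq_sin_div_cos]
  field_simp
  linear_combination -Real.sin_sq_add_cos_sq r

lemma isSymm_of_mink : (Matrix.of mink).IsSymm := by
  ext μ ν
  simp only [transpose_apply, of_apply, mink]
  split_ifs <;> simp_all

lemma of_mink_mulVec (ξ : Fin 4 → ℝ) : Matrix.of mink *ᵥ ξ = lowerIdx ξ := rfl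

lemma msq_eq_dotProduct (ξ : Fin 4 → ℝ) : msq ξ = ξ ⬝ᵥ lowerIdx ξ := by
  simp only [msq, lowerIdx, dotProduct, Finset.mul_sum]
  exact Finset.sum_congr rfl fun _ _ => Finset.sum_congr rfl fun _ _ => by ring

lemma of_viel (v : ℝ) (ξ : Fin 4 → ℝ) :
    Matrix.of (viel v ξ) = 1 + ((1 / Real.cos (Real.sqrt (v * msq ξ)) - 1) / msq ξ) •
      vecMulVec ξ (Matrix.of mink *ᵥ ξ) := by
  ext α μ
  simp only [of_apply, viel, Matrix.add_apply, one_apply, Matrix.smul_apply, vecMulVec_apply,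
    of_mink_mulVec, smul_eq_mul]
  ring

theorem stmt19_general (v : ℝ) (ξ dθ : Fin 4 → ℝ)
    (hpos : 0 < v * msq ξ)
    (hcos : Real.cos (Real.sqrt (v * msq ξ)) ≠ 0)
    (hθ : ∀ μ, dθ μ = lowerIdx ξ μ *
      (Real.tan (Real.sqrt (v * msq ξ)) / Real.sqrt (v * msq ξ))) :
    ∀ μ ν, (∑ α, ∑ β, mink α β * viel v ξ α μ * viel v ξ β ν)
      = mink μ ν + v * dθ μ * dθ ν := by
  intro μ ν
  obtain ⟨hv, hmsq⟩ := mul_ne_zero_iff.mp hpos.ne'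
  set r := Real.sqrt (v * msq ξ)
  set c := (1 / Real.cos r - 1) / msq ξ
  have hcoef : 2 * c + c ^ 2 * msq ξ = v * (Real.tan r / r) ^ 2 := by
    have hr2 : r ^ 2 = v * msq ξ := Real.sq_sqrt hpos.le
    rw [div_pow (Real.tan r), hr2, ← one_div_cos_sub_one_sq_add_two_mul r hcos]
    simp only [c]
    field_simp
    ring
  calc (∑ α, ∑ β, mink α β * viel v ξ α μ * viel v ξ β ν)
      = ((Matrix.of (viel v ξ))ᵀ * Matrix.of mink * Matrix.of (viel v ξ)) μ ν :=
        (transpose_mul_mul_apply _ _ μ ν).symm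
    _ = mink μ ν + (2 * c + c ^ 2 * msq ξ) * lowerIdx ξ μ * lowerIdx ξ ν := by
        rw [of_viel, transpose_mul_mul_one_add_smul_vecMulVec isSymm_of_mink, of_mink_mulVec,
          ← msq_eq_dotProduct]
        simp only [Matrix.add_apply, Matrix.smul_apply, vecMulVec_apply, of_apply, smul_eq_mul]
        ring
    _ = mink μ ν + v * dθ μ * dθ ν := by
        rw [hθ, hθ, hcoef]
        ring

/-- With `ξ_μ tan√(vξ²)/√(vξ²) = ∂_μθ`, the induced metric
`G_{μν} = g_{αβ} e^α_μ e^β_ν` equals `g_{μν} + v ∂_μθ ∂_νθ`. -/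
theorem stmt19 (v : ℝ) (hv : 0 < v) (ξ dθ : Fin 4 → ℝ)
    (hpos : 0 < v * msq ξ)
    (hcos : Real.cos (Real.sqrt (v * msq ξ)) ≠ 0)
    (hθ : ∀ μ, dθ μ = lowerIdx ξ μ *
      (Real.tan (Real.sqrt (v * msq ξ)) / Real.sqrt (v * msq ξ))) :
    ∀ μ ν, (∑ α, ∑ β, mink α β * viel v ξ α μ * viel v ξ β ν)
      = mink μ ν + v * dθ μ * dθ ν :=
  stmt19_general v ξ dθ hpos hcos hθ
end
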